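/- Let C be an n×n real matrix with nonnegative entries. Then I − C is invertible with (I − C)^{-1} having all entries nonnegative if and only if the spectral radius of C is strictly less than 1. -/

import Mathlib

/-!
If `(1 - C)⁻¹ ≥ 0` and `C v = z v` with `‖z‖ ≥ 1`, then `u = |v|` satisfies `0 ≤ u ≤ C u`, so
`(1 - C) u ≤ 0` and `u = (1 - C)⁻¹ ((1 - C) u) ≤ 0`, forcing `v = 0`. Conversely, if the spectral
radius is `< 1`, then `1` is not an eigenvalue, and Gelfand's formula gives `C ^ k → 0`; hence
`(1 - C)⁻¹` is the limit of the Neumann partial sums `∑ k < N, C ^ k`, which are nonnegative.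
-/

open Matrix

/-- The spectral radius of a real square matrix: the maximum of the absolute values of
its complex eigenvalues (elements of the spectrum of the matrix over `ℂ`). -/
noncomputable def specRad {n : ℕ} (C : Matrix (Fin n) (Fin n) ℝ) : ℝ :=
  sSup ((fun z : ℂ => ‖z‖) '' spectrum ℂ (C.map (algebraMap ℝ ℂ)))

open Filter Topology Finset

theorem tendsto_pow_atTop_nhds_zero_of_spectralRadius_lt_one {A : Type*} [NormedRing A]
    [NormedAlgebra ℂ A] [CompleteSpace A] {a : A} (h : spectralRadius ℂ a < 1) :
    Tendsto (a ^ ·) atTop (𝓝 0) := by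
  obtain ⟨r, hρr, hr1⟩ := ENNReal.lt_iff_exists_nnreal_btwn.1 h
  have hle : ∀ᶠ k : ℕ in atTop, ‖a ^ k‖ ≤ (r : ℝ) ^ k := by
    filter_upwards [(spectrum.pow_nnnorm_pow_one_div_tendsto_nhds_spectralRadius a).eventually
      (gt_mem_nhds hρr), eventually_gt_atTop 0] with k hk hk0
    rw [one_div, ← ENNReal.coe_rpow_of_nonneg _ (by positivity), ENNReal.coe_lt_coe,
      NNReal.rpow_inv_lt_iff (by positivity), NNReal.rpow_natCast] at hk
    exact_mod_cast hk.le
  exact squeeze_zero_norm' hle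
    (tendsto_pow_atTop_nhds_zero_of_lt_one r.coe_nonneg (by exact_mod_cast hr1))

theorem tendsto_geom_sum_nhds_inverse_one_sub {R : Type*} [Ring R] [TopologicalSpace R]
    [IsTopologicalRing R] {a : R} (hu : IsUnit (1 - a)) (ha : Tendsto (a ^ ·) atTop (𝓝 0)) :
    Tendsto (fun N => ∑ k ∈ range N, a ^ k) atTop (𝓝 (Ring.inverse (1 - a))) := by
  have hsum (N : ℕ) : ∑ k ∈ range N, a ^ k = Ring.inverse (1 - a) * (1 - a ^ N) := by
    rw [← mul_neg_geom_sum, ← mul_assoc, Ring.inverse_mul_cancel _ hu, one_mul]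
  simpa only [hsum, sub_zero, mul_one] using
    ((tendsto_const_nhds (x := 1)).sub ha).const_mul (Ring.inverse (1 - a))

namespace Matrix

variable {ι : Type*} [Fintype ι]

theorem norm_mulVec_map_ofReal_le {C : Matrix ι ι ℝ} (hC : ∀ i j, 0 ≤ C i j) (v : ι → ℂ)
    (i : ι) : ‖(C.map (algebraMap ℝ ℂ) *ᵥ v) i‖ ≤ (C *ᵥ fun j => ‖v j‖) i := by
  simp only [mulVec, dotProduct]
  refine (norm_sum_le _ _).trans_eq (sum_congr rfl fun j _ => ?_)
  simp [abs_of_nonneg (hC i j)]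

variable [DecidableEq ι]

theorem tendsto_pow_of_spectralRadius_lt_one {A : Matrix ι ι ℂ} (h : spectralRadius ℂ A < 1) :
    Tendsto (A ^ ·) atTop (𝓝 0) := by
  -- The `L∞` operator norm makes matrices a Banach algebra inducing the usual product topology.
  open scoped Matrix.Norms.Operator in
  exact tendsto_pow_atTop_nhds_zero_of_spectralRadius_lt_one h

theorem tendsto_pow_of_spectralRadius_map_lt_one {C : Matrix ι ι ℝ}
    (h : spectralRadius ℂ (C.map (algebraMap ℝ ℂ)) < 1) : Tendsto (C ^ ·) atTop (𝓝 0) := by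
  have hre := ((continuous_id.matrix_map Complex.continuous_re).tendsto 0).comp
    (tendsto_pow_of_spectralRadius_lt_one h)
  have hpow (k : ℕ) : (C.map (algebraMap ℝ ℂ) ^ k).map Complex.re = C ^ k := by
    rw [← RingHom.mapMatrix_apply, ← map_pow, RingHom.mapMatrix_apply, Matrix.map_map]
    ext
    simp
  simpa only [Function.comp_def, id_eq, hpow, Matrix.map_zero _ Complex.zero_re] using hre

theorem inv_apply_nonneg_of_tendsto_pow {C : Matrix ι ι ℝ} (hC : ∀ i j, 0 ≤ C i j)
    (hU : IsUnit (1 - C)) (hpow : Tendsto (C ^ ·) atTop (𝓝 0)) (i j : ι) :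
    0 ≤ (1 - C)⁻¹ i j := by
  have hlim := tendsto_geom_sum_nhds_inverse_one_sub hU hpow
  rw [← nonsing_inv_eq_ringInverse] at hlim
  refine ge_of_tendsto' ((hlim.apply_nhds i).apply_nhds j) fun N => ?_
  rw [sum_apply]
  exact sum_nonneg fun k _ => pow_apply_nonneg hC k i j

theorem algebraMap_mem_spectrum_map {K L : Type*} [Field K] [Field L] [Algebra K L]
    {A : Matrix ι ι K} {r : K} (hr : r ∈ spectrum K A) :
    algebraMap K L r ∈ spectrum L (A.map (algebraMap K L)) := by
  rw [mem_spectrum_iff_isRoot_charpoly] at hr ⊢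
  rw [charpoly_map]
  exact hr.map

theorem isUnit_one_sub_of_one_notMem_spectrum_map {C : Matrix ι ι ℝ}
    (h : 1 ∉ spectrum ℂ (C.map (algebraMap ℝ ℂ))) : IsUnit (1 - C) := by
  by_contra hU
  refine h ?_
  rw [← map_one (algebraMap ℝ ℂ)]
  exact algebraMap_mem_spectrum_map (by rwa [spectrum.mem_iff, map_one])

theorem exists_mulVec_eq_smul_of_mem_spectrum {K : Type*} [Field K] {A : Matrix ι ι K} {z : K}
    (hz : z ∈ spectrum K A) : ∃ v ≠ 0, A *ᵥ v = z • v := by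
  rw [← spectrum_toLin', ← Module.End.hasEigenvalue_iff_mem_spectrum] at hz
  obtain ⟨v, hv⟩ := hz.exists_hasEigenvector
  exact ⟨v, hv.2, by simpa using hv.apply_eq_smul⟩

theorem eq_zero_of_le_mulVec {C : Matrix ι ι ℝ} (hU : IsUnit (1 - C))
    (hinv : ∀ i j, 0 ≤ (1 - C)⁻¹ i j) {u : ι → ℝ} (hu : 0 ≤ u) (hCu : u ≤ C *ᵥ u) : u = 0 := by
  have hsub : (1 - C) *ᵥ u ≤ 0 := by
    rw [sub_mulVec, one_mulVec]
    exact sub_nonpos.2 hCu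
  have hu_eq : u = (1 - C)⁻¹ *ᵥ ((1 - C) *ᵥ u) := by
    rw [mulVec_mulVec, nonsing_inv_mul _ ((isUnit_iff_isUnit_det _).1 hU), one_mulVec]
  refine le_antisymm (fun i => ?_) hu
  rw [hu_eq]
  exact sum_nonpos fun j _ => mul_nonpos_of_nonneg_of_nonpos (hinv i j) (hsub j)

theorem norm_lt_one_of_mem_spectrum_map {C : Matrix ι ι ℝ} (hC : ∀ i j, 0 ≤ C i j)
    (hU : IsUnit (1 - C)) (hinv : ∀ i j, 0 ≤ (1 - C)⁻¹ i j) {z : ℂ}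
    (hz : z ∈ spectrum ℂ (C.map (algebraMap ℝ ℂ))) : ‖z‖ < 1 := by
  obtain ⟨v, hv0, hv⟩ := exists_mulVec_eq_smul_of_mem_spectrum hz
  by_contra! hz1
  have hu : (fun j => ‖v j‖) = 0 := eq_zero_of_le_mulVec hU hinv (fun j => norm_nonneg _)
    fun i => calc
      ‖v i‖ ≤ ‖z‖ * ‖v i‖ := le_mul_of_one_le_left (norm_nonneg _) hz1
      _ = ‖(C.map (algebraMap ℝ ℂ) *ᵥ v) i‖ := by rw [hv, Pi.smul_apply, smul_eq_mul, norm_mul]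
      _ ≤ _ := norm_mulVec_map_ofReal_le hC v i
  exact hv0 (funext fun j => norm_eq_zero.1 (congr_fun hu j))

end Matrix

section specRad

variable {n : ℕ} {C : Matrix (Fin n) (Fin n) ℝ}

theorem norm_le_specRad {z : ℂ} (hz : z ∈ spectrum ℂ (C.map (algebraMap ℝ ℂ))) :
    ‖z‖ ≤ specRad C :=
  le_csSup ((finite_spectrum _).image _).bddAbove ⟨z, hz, rfl⟩

theorem spectralRadius_map_le_specRad :
    spectralRadius ℂ (C.map (algebraMap ℝ ℂ)) ≤ ENNReal.ofReal (specRad C) :=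
  iSup₂_le fun _ hz => by
    rw [← ENNReal.ofReal_coe_nnreal, coe_nnnorm]
    exact ENNReal.ofReal_le_ofReal (norm_le_specRad hz)

theorem specRad_lt_iff {a : ℝ} (ha : 0 < a) :
    specRad C < a ↔ ∀ z ∈ spectrum ℂ (C.map (algebraMap ℝ ℂ)), ‖z‖ < a := by
  rcases (spectrum ℂ (C.map (algebraMap ℝ ℂ))).eq_empty_or_nonempty with h | h
  · rw [specRad, h]
    simp [ha]
  · rw [specRad, ((finite_spectrum _).image _).csSup_lt_iff (h.image _), Set.forall_mem_image]

end specRad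

/-- For a nonnegative matrix `C`, the matrix `I - C` is invertible with a
(entrywise) nonnegative inverse if and only if the spectral radius of `C` is strictly
less than `1`. -/
theorem inv_nonneg_iff_specRad_lt_one
    (n : ℕ) (C : Matrix (Fin n) (Fin n) ℝ) (hC : ∀ i j, 0 ≤ C i j) :
    (IsUnit (1 - C) ∧ ∀ i j, 0 ≤ (1 - C)⁻¹ i j) ↔ specRad C < 1 := by
  constructor
  · rintro ⟨hU, hinv⟩
    exact (specRad_lt_iff one_pos).2 fun z hz => norm_lt_one_of_mem_spectrum_map hC hU hinv hz
  · intro h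
    have hU : IsUnit (1 - C) := isUnit_one_sub_of_one_notMem_spectrum_map fun h1 => by
      simpa using (specRad_lt_iff one_pos).1 h 1 h1
    have hρ : spectralRadius ℂ (C.map (algebraMap ℝ ℂ)) < 1 :=
      spectralRadius_map_le_specRad.trans_lt (ENNReal.ofReal_lt_one.2 h)
    exact ⟨hU, inv_apply_nonneg_of_tendsto_pow hC hU
      (tendsto_pow_of_spectralRadius_map_lt_one hρ)⟩
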